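/- arXiv:2211.12204 — 4 statements merged into one kernel-verified Lean document; each statement's English description precedes it below -/
import Mathlib

section
/- Suppose n, k ∈ ℕ and H is a coloured graph containing a blue path P = u0 u1 ⋯ u_{k+1} such that u0u_{k+1} is not an edge of H or is a red edge of H, no edge of N_H({u1,…,uk}) outside E(P) is blue, and |N_H({u1,…,uk})| + δ_H(u0,u_{k+1}) ≤ 2k + 1. Let H' be the graph obtained from H by contraction of the path P to the edge u0u_{k+1}. If Builder has a winning strategy in RR(C4, P_{n−k}, H'), then Builder has a winning strategy in RR(C4, Pn, H). -/
/-!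
The game `RR(C₄, Pₙ, H)`: the board is `K_ℕ` on which a coloured graph `H`
(with red edge set `R₀` and blue edge set `B₀`) is initially placed.  In each
round Builder selects a previously uncoloured edge and Painter colours it red
(`true`) or blue (`false`), except that Painter may never colour an edge red
if the red edges would then contain a `C₄`.  Builder wins if `e(H) ≤ 2n - 2`
and after at most `2n - 2 - e(H)` rounds the blue edges number exactly `n - 1`
and contain a path on `n` vertices.
-/

namespace OnlineRamsey

abbrev Edge := Sym2 ℕ
abbrev History := List (Edge × Bool)   -- `true` = red, `false` = blue
abbrev BuilderStrat := History → Edge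
abbrev PainterStrat := History → Edge → Bool

/-- The history of coloured edges after `t` rounds (not counting the initial
coloured graph), when Builder follows `B` and Painter follows `P`. -/
def gamePlay (B : BuilderStrat) (P : PainterStrat) : ℕ → History
  | 0 => []
  | t + 1 =>
      let h := gamePlay B P t
      h ++ [(B h, P h (B h))]

/-- All red edges: the initially placed ones together with those coloured red. -/
def redSet (R₀ : Set Edge) (h : History) : Set Edge := R₀ ∪ {e | (e, true) ∈ h}

/-- All blue edges: the initially placed ones together with those coloured blue. -/
def blueSet (B₀ : Set Edge) (h : History) : Set Edge := B₀ ∪ {e | (e, false) ∈ h}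

/-- `H` contains a copy of `G`. -/
def HasCopy {α β : Type} (G : SimpleGraph α) (H : SimpleGraph β) : Prop :=
  ∃ f : G →g H, Function.Injective f

/-- Painter never colours an edge red if the red edges would then contain a `C₄`. -/
def PainterLegal (R₀ : Set Edge) (P : PainterStrat) : Prop :=
  ∀ (h : History) (e : Edge), P h e = true →
    ¬ HasCopy (SimpleGraph.cycleGraph 4)
        (SimpleGraph.fromEdgeSet (insert e (redSet R₀ h)))

/-- During the first `m` rounds Builder always selects a previously uncoloured
(non-loop) edge. -/
def BuilderLegal (R₀ B₀ : Set Edge) (B : BuilderStrat) (m : ℕ) : Prop :=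
  ∀ P : PainterStrat, ∀ t < m,
    ¬ (B (gamePlay B P t)).IsDiag ∧
      B (gamePlay B P t) ∉ redSet R₀ (gamePlay B P t) ∪ blueSet B₀ (gamePlay B P t)

/-- Builder has a winning strategy in the game `RR(C₄, Pₙ, H)`, where the initial
coloured graph `H` has red edge set `R₀` and blue edge set `B₀`. -/
def RRWin (n : ℕ) (R₀ B₀ : Set Edge) : Prop :=
  (R₀ ∪ B₀).ncard ≤ 2 * n - 2 ∧
  ∃ B : BuilderStrat, BuilderLegal R₀ B₀ B (2 * n - 2 - (R₀ ∪ B₀).ncard) ∧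
    ∀ P : PainterStrat, PainterLegal R₀ P →
      ∃ t ≤ 2 * n - 2 - (R₀ ∪ B₀).ncard,
        (blueSet B₀ (gamePlay B P t)).ncard = n - 1 ∧
        HasCopy (SimpleGraph.pathGraph n)
          (SimpleGraph.fromEdgeSet (blueSet B₀ (gamePlay B P t)))

/-- The internal vertices `u₁, …, u_k` of the path `u₀ u₁ ⋯ u_{k+1}`. -/
def interiorVerts {k : ℕ} (u : Fin (k + 2) → ℕ) : Set ℕ :=
  {v | ∃ i : Fin (k + 2), 1 ≤ (i : ℕ) ∧ (i : ℕ) ≤ k ∧ v = u i}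

/-- `N_H(A)`: the set of edges of the coloured graph (with red edges `R` and blue
edges `Bl`) having at least one endpoint in `A`. -/
def edgeNbhd (R Bl : Set Edge) (A : Set ℕ) : Set Edge :=
  {e | e ∈ R ∪ Bl ∧ ∃ v ∈ A, v ∈ e}


/-!
Builder copies a winning strategy for `H'` through an injective relabelling `ψ` of `ℕ` that
fixes the vertices of `H'` and sends every other vertex outside `H`. The edges Builder selects
are then new in `H`, and Painter's answers pull back to a legal Painter on `H'`. Since `H` has at
most `2k` more edges than `H'`, the time budget suffices; once it is used up, Builder plays
arbitrary fresh edges. When the game on `H'` ends with a blue `P_{n-k}` made of all its `n-k-1`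
blue edges, this path runs through the blue edge `u₀u_{k+1}`; replacing that edge by the blue path
`u₀u₁⋯u_{k+1}` of `H`, whose inner vertices `ψ` never hits, gives a blue `P_n`, and `H` has exactly
`k` more blue edges than `H'`.
-/

open Function

theorem HasCopy.of_map {α : Type} {G : SimpleGraph α} {E E' : Set Edge} {ψ : ℕ → ℕ}
    (hψ : Injective ψ) (hmaps : ∀ e ∈ E, Sym2.map ψ e ∈ E')
    (h : HasCopy G (SimpleGraph.fromEdgeSet E)) : HasCopy G (SimpleGraph.fromEdgeSet E') := by
  obtain ⟨f, hf⟩ := h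
  refine ⟨⟨ψ ∘ f, fun hab => ?_⟩, hψ.comp hf⟩
  obtain ⟨hE, hne⟩ := (SimpleGraph.fromEdgeSet_adj _).mp (f.map_adj hab)
  exact (SimpleGraph.fromEdgeSet_adj _).mpr ⟨hmaps _ hE, hψ.ne hne⟩

def IsPathSeq (E : Set Edge) (m : ℕ) (c : ℕ → ℕ) : Prop :=
  Set.InjOn c (Set.Iio m) ∧ ∀ i, i + 1 < m → s(c i, c (i + 1)) ∈ E

theorem IsPathSeq.hasCopy {E : Set Edge} {m : ℕ} {c : ℕ → ℕ} (hc : IsPathSeq E m c) :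
    HasCopy (SimpleGraph.pathGraph m) (SimpleGraph.fromEdgeSet E) := by
  have hinj : Injective fun i : Fin m => c i := fun a b hab => Fin.ext (hc.1 a.2 b.2 hab)
  refine ⟨⟨fun i => c i, fun {a b} hab => ?_⟩, hinj⟩
  refine (SimpleGraph.fromEdgeSet_adj _).mpr ⟨?_, hinj.ne hab.ne⟩
  rcases SimpleGraph.pathGraph_adj.mp hab with h | h
  · simpa [← h] using hc.2 a (h ▸ b.2)
  · simpa [← h, Sym2.eq_swap] using hc.2 b (h ▸ a.2)

theorem HasCopy.exists_isPathSeq {E : Set Edge} {m : ℕ}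
    (h : HasCopy (SimpleGraph.pathGraph m) (SimpleGraph.fromEdgeSet E)) :
    ∃ c, IsPathSeq E m c := by
  obtain ⟨f, hf⟩ := h
  refine ⟨fun i => if hi : i < m then f ⟨i, hi⟩ else 0, fun i hi j hj hij => ?_, fun i hi => ?_⟩
  · simp only [Set.mem_Iio] at hi hj
    simpa [hi, hj] using congrArg Fin.val (hf (by simpa [hi, hj] using hij))
  · have hadj : (SimpleGraph.pathGraph m).Adj ⟨i, by omega⟩ ⟨i + 1, hi⟩ :=
      SimpleGraph.pathGraph_adj.mpr (Or.inl rfl)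
    simpa [show i < m by omega, hi] using ((SimpleGraph.fromEdgeSet_adj _).mp (f.map_adj hadj)).1

theorem IsPathSeq.reverse {E : Set Edge} {m : ℕ} {c : ℕ → ℕ} (hc : IsPathSeq E m c) :
    IsPathSeq E m fun i => c (m - 1 - i) := by
  refine ⟨fun i hi j hj hij => ?_, fun i hi => ?_⟩
  · simp only [Set.mem_Iio] at hi hj
    have := hc.1 (show m - 1 - i < m by omega) (show m - 1 - j < m by omega) hij
    omega
  · have := hc.2 (m - 1 - (i + 1)) (by omega)
    rwa [show m - 1 - (i + 1) + 1 = m - 1 - i by omega, Sym2.eq_swap] at this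

theorem IsPathSeq.mono {E F : Set Edge} {m : ℕ} {c : ℕ → ℕ} (hc : IsPathSeq E m c)
    (hEF : E ⊆ F) : IsPathSeq F m c :=
  ⟨hc.1, fun i hi => hEF (hc.2 i hi)⟩

theorem IsPathSeq.edge_inj {E : Set Edge} {m : ℕ} {c : ℕ → ℕ} (hc : IsPathSeq E m c) {i j : ℕ}
    (hi : i + 1 < m) (hj : j + 1 < m) (hij : s(c i, c (i + 1)) = s(c j, c (j + 1))) : i = j := by
  have hc' : ∀ a < m, ∀ b < m, c a = c b → a = b := fun a ha b hb h => hc.1 ha hb h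
  rcases Sym2.eq_iff.mp hij with ⟨h, -⟩ | ⟨h1, h2⟩
  · exact hc' i (by omega) j (by omega) h
  · have := hc' i (by omega) (j + 1) hj h1
    have := hc' (i + 1) hi j (by omega) h2
    omega

/-- A path on `m` vertices in a graph with only `m - 1` edges uses all of them. -/
theorem IsPathSeq.exists_edge_eq {E : Set Edge} {m : ℕ} {c : ℕ → ℕ} (hc : IsPathSeq E m c)
    (hE : E.Finite) (hcard : E.ncard = m - 1) {e : Edge} (he : e ∈ E) :
    ∃ j, j + 1 < m ∧ e = s(c j, c (j + 1)) := by
  classical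
  set T := (Finset.range (m - 1)).image fun i => s(c i, c (i + 1))
  have hTE : (T : Set Edge) ⊆ E := by
    intro e he
    obtain ⟨i, hi, rfl⟩ := Finset.mem_image.mp he
    exact hc.2 i (by simp at hi; omega)
  have hTcard : T.card = m - 1 := by
    rw [Finset.card_image_of_injOn, Finset.card_range]
    intro i hi j hj hij
    simp only [Finset.coe_range, Set.mem_Iio] at hi hj
    exact hc.edge_inj (by omega) (by omega) hij
  rw [← Set.eq_of_subset_of_ncard_le hTE (by rw [Set.ncard_coe_finset]; omega) hE] at he
  obtain ⟨j, hj, rfl⟩ := Finset.mem_image.mp he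
  exact ⟨j, by simp at hj; omega, rfl⟩

theorem isPathSeq_splice {G : Set Edge} {m k j : ℕ} {c w : ℕ → ℕ}
    (hc : Set.InjOn c (Set.Iio m)) (hcG : ∀ i, i + 1 < m → i ≠ j → s(c i, c (i + 1)) ∈ G)
    (hw : IsPathSeq G (k + 2) w) (hj : j + 1 < m) (hw0 : w 0 = c j) (hw1 : w (k + 1) = c (j + 1))
    (hdisj : ∀ i, 1 ≤ i → i ≤ k → ∀ l < m, w i ≠ c l) :
    IsPathSeq G (m + k)
      fun i => if i ≤ j then c i else if i ≤ j + k then w (i - j) else c (i - k) := by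
  have hc' : ∀ i < m, ∀ i' < m, c i = c i' → i = i' := fun i hi i' hi' h => hc hi hi' h
  have hw' : ∀ i < k + 2, ∀ i' < k + 2, w i = w i' → i = i' := fun i hi i' hi' h => hw.1 hi hi' h
  refine ⟨fun i hi i' hi' h => ?_, fun i hi => ?_⟩
  · simp only [Set.mem_Iio] at hi hi'
    dsimp only at h
    split_ifs at h
    all_goals first
      | have := hc' _ (by omega) _ (by omega) h; omega
      | have := hw' _ (by omega) _ (by omega) h; omega
      | exact absurd h (hdisj _ (by omega) (by omega) _ (by omega)).symm
      | exact absurd h (hdisj _ (by omega) (by omega) _ (by omega))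
  · dsimp only
    by_cases h1 : i + 1 ≤ j
    · rw [if_pos (by omega), if_pos h1]
      exact hcG i (by omega) (by omega)
    by_cases h2 : i = j
    · subst h2
      rcases Nat.eq_zero_or_pos k with rfl | hk
      · rw [if_pos le_rfl, if_neg (by omega), if_neg (by omega), Nat.sub_zero, ← hw0, ← hw1]
        exact hw.2 0 (by omega)
      · rw [if_pos le_rfl, if_neg (by omega), if_pos (by omega), ← hw0,
          show i + 1 - i = 0 + 1 by omega]
        exact hw.2 0 (by omega)
    by_cases h3 : i + 1 ≤ j + k
    · rw [if_neg (by omega), if_pos (by omega), if_neg h1, if_pos h3,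
        show i + 1 - j = i - j + 1 by omega]
      exact hw.2 _ (by omega)
    by_cases h4 : i ≤ j + k
    · rw [if_neg (by omega), if_pos h4, if_neg h1, if_neg h3, show i - j = k by omega,
        show i + 1 - k = j + 1 by omega, ← hw1]
      exact hw.2 k (by omega)
    · rw [if_neg (by omega), if_neg h4, if_neg h1, if_neg h3, show i + 1 - k = i - k + 1 by omega]
      exact hcG _ (by omega) (by omega)

theorem exists_isPathSeq_splice {G : Set Edge} {m k j : ℕ} {c w : ℕ → ℕ}
    (hc : Set.InjOn c (Set.Iio m)) (hcG : ∀ i, i + 1 < m → i ≠ j → s(c i, c (i + 1)) ∈ G)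
    (hw : IsPathSeq G (k + 2) w) (hj : j + 1 < m) (hends : s(w 0, w (k + 1)) = s(c j, c (j + 1)))
    (hdisj : ∀ i, 1 ≤ i → i ≤ k → ∀ l < m, w i ≠ c l) :
    ∃ g, IsPathSeq G (m + k) g := by
  rcases Sym2.eq_iff.mp hends with ⟨h0, h1⟩ | ⟨h0, h1⟩
  · exact ⟨_, isPathSeq_splice hc hcG hw hj h0 h1 hdisj⟩
  · refine ⟨_, isPathSeq_splice hc hcG hw.reverse hj (by simpa using h1) (by simpa using h0) ?_⟩
    intro i hi1 hi2
    exact hdisj _ (by omega) (by omega)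

theorem exists_fresh_edge {S : Set Edge} (hS : S.Finite) : ∃ e : Edge, ¬ e.IsDiag ∧ e ∉ S := by
  have hinj : Injective fun a : ℕ => (s(a, a + 1) : Edge) := fun a b hab => by
    simp only [Sym2.eq, Sym2.rel_iff', Prod.mk.injEq, Prod.swap_prod_mk] at hab
    omega
  obtain ⟨e, ⟨a, rfl⟩, he⟩ := (Set.infinite_range_of_injective hinj).exists_notMem_finite hS
  exact ⟨_, by simp [Sym2.mk_isDiag_iff], he⟩

noncomputable def freshEdge (S : Set Edge) : Edge :=
  Classical.epsilon fun e : Edge => ¬ e.IsDiag ∧ e ∉ S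

theorem freshEdge_spec {S : Set Edge} (hS : S.Finite) : ¬ (freshEdge S).IsDiag ∧ freshEdge S ∉ S :=
  Classical.epsilon_spec (exists_fresh_edge hS)

theorem finite_setOf_mem_history (h : History) (b : Bool) : {e | (e, b) ∈ h}.Finite :=
  (h.finite_toSet.image Prod.fst).subset fun e he => ⟨(e, b), he, rfl⟩

theorem finite_redSet_union_blueSet {R B : Set Edge} (hR : R.Finite) (hB : B.Finite)
    (h : History) : (redSet R h ∪ blueSet B h).Finite :=
  (hR.union (finite_setOf_mem_history h true)).union (hB.union (finite_setOf_mem_history h false))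

theorem BuilderLegal.notMem_of_mem_gamePlay {R B : Set Edge} {S : BuilderStrat} {m : ℕ}
    (hS : BuilderLegal R B S m) (P : PainterStrat) {t : ℕ} (ht : t ≤ m) {e : Edge} {b : Bool}
    (he : (e, b) ∈ gamePlay S P t) : e ∉ R ∪ B := by
  induction t with
  | zero => simp [gamePlay] at he
  | succ t ih =>
    simp only [gamePlay, List.mem_append, List.mem_singleton, Prod.mk.injEq] at he
    rcases he with he | ⟨rfl, -⟩
    · exact ih (by omega) he
    · have hfresh := (hS P t (by omega)).2
      rintro (he | he)
      · exact hfresh (Or.inl (Or.inl he))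
      · exact hfresh (Or.inr (Or.inl he))

theorem gamePlay_length (S : BuilderStrat) (P : PainterStrat) (t : ℕ) :
    (gamePlay S P t).length = t := by
  induction t with
  | zero => rfl
  | succ t ih => simp [gamePlay, ih]

def relabelHistory (ψ : ℕ → ℕ) (h : History) : History :=
  h.map (Prod.map (Sym2.map ψ) id)

section Relabel

variable {ψ : ℕ → ℕ}

theorem relabelHistory_invFun (hψ : Injective ψ) (h : History) :
    relabelHistory (invFun ψ) (relabelHistory ψ h) = h := by
  rw [relabelHistory, relabelHistory, List.map_map]
  convert List.map_id h
  ext1 p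
  simp [Prod.map, Sym2.map_map, leftInverse_invFun hψ _]

theorem setOf_mem_relabelHistory (ψ : ℕ → ℕ) (h : History) (b : Bool) :
    {e | (e, b) ∈ relabelHistory ψ h} = Sym2.map ψ '' {e | (e, b) ∈ h} := by
  ext e
  simp [relabelHistory, Prod.map]

theorem map_mem_relabelHistory_iff (hψ : Injective ψ) {h : History} {e : Edge} {b : Bool} :
    (Sym2.map ψ e, b) ∈ relabelHistory ψ h ↔ (e, b) ∈ h := by
  have := congrArg (Sym2.map ψ e ∈ ·) (setOf_mem_relabelHistory ψ h b)
  simpa [(Sym2.map.injective hψ).mem_set_image] using this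

variable {R B R' B' : Set Edge}

theorem map_notMem_redSet_union_blueSet (hψ : Injective ψ)
    (hfresh : ∀ e ∉ R' ∪ B', Sym2.map ψ e ∉ R ∪ B) {h : History} {e : Edge}
    (he : e ∉ redSet R' h ∪ blueSet B' h) :
    Sym2.map ψ e ∉ redSet R (relabelHistory ψ h) ∪ blueSet B (relabelHistory ψ h) := by
  simp only [redSet, blueSet, Set.mem_union, Set.mem_ofPred_eq, map_mem_relabelHistory_iff hψ,
    not_or] at he ⊢
  have := hfresh e (by simp [he.1.1, he.2.1])
  simp only [Set.mem_union, not_or] at this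
  tauto

noncomputable def relabelStrategy (R B : Set Edge) (ψ : ℕ → ℕ) (S' : BuilderStrat) (m : ℕ) :
    BuilderStrat := fun h =>
  if h.length < m then Sym2.map ψ (S' (relabelHistory (invFun ψ) h))
  else freshEdge (redSet R h ∪ blueSet B h)

def relabelPainter (ψ : ℕ → ℕ) (P : PainterStrat) : PainterStrat :=
  fun h e => P (relabelHistory ψ h) (Sym2.map ψ e)

theorem relabelStrategy_relabelHistory (hψ : Injective ψ) (S' : BuilderStrat) {m : ℕ}
    {h : History} (hh : h.length < m) :
    relabelStrategy R B ψ S' m (relabelHistory ψ h) = Sym2.map ψ (S' h) := by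
  rw [relabelStrategy, if_pos (by simpa [relabelHistory] using hh), relabelHistory_invFun hψ]

theorem gamePlay_relabelStrategy (hψ : Injective ψ) (S' : BuilderStrat) (P : PainterStrat)
    {m t : ℕ} (ht : t ≤ m) :
    gamePlay (relabelStrategy R B ψ S' m) P t =
      relabelHistory ψ (gamePlay S' (relabelPainter ψ P) t) := by
  induction t with
  | zero => rfl
  | succ t ih =>
    rw [gamePlay, gamePlay, ih (by omega),
      relabelStrategy_relabelHistory hψ S' (by rw [gamePlay_length]; omega)]
    simp [relabelHistory, relabelPainter]

theorem builderLegal_relabelStrategy (hR : R.Finite) (hB : B.Finite) (hψ : Injective ψ)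
    (hfresh : ∀ e ∉ R' ∪ B', Sym2.map ψ e ∉ R ∪ B) {S' : BuilderStrat} {m : ℕ}
    (hS' : BuilderLegal R' B' S' m) (m' : ℕ) :
    BuilderLegal R B (relabelStrategy R B ψ S' m) m' := by
  intro P t _
  by_cases ht : t < m
  · obtain ⟨hloop, hnew⟩ := hS' (relabelPainter ψ P) t ht
    rw [gamePlay_relabelStrategy hψ S' P ht.le,
      relabelStrategy_relabelHistory hψ S' (by rwa [gamePlay_length])]
    exact ⟨(Sym2.isDiag_map hψ).not.mpr hloop, map_notMem_redSet_union_blueSet hψ hfresh hnew⟩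
  · rw [relabelStrategy, if_neg (by rw [gamePlay_length]; omega)]
    exact freshEdge_spec (finite_redSet_union_blueSet hR hB _)

theorem painterLegal_relabelPainter (hψ : Injective ψ) (hred : ∀ e ∈ R', Sym2.map ψ e ∈ R)
    {P : PainterStrat} (hP : PainterLegal R P) : PainterLegal R' (relabelPainter ψ P) := by
  intro h e hPe hcopy
  refine hP _ _ hPe (hcopy.of_map hψ fun f hf => ?_)
  rcases hf with rfl | hf | hf
  · exact Set.mem_insert _ _
  · exact Set.mem_insert_of_mem _ (Or.inl (hred f hf))
  · exact Set.mem_insert_of_mem _ (Or.inr ((map_mem_relabelHistory_iff hψ).mpr hf))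

theorem ncard_blueSet (hB : B.Finite) {h : History} (hnew : ∀ e, (e, false) ∈ h → e ∉ B) :
    (blueSet B h).ncard = B.ncard + {e | (e, false) ∈ h}.ncard :=
  Set.ncard_union_eq (Set.disjoint_right.mpr hnew) hB (finite_setOf_mem_history h false)

theorem ncard_blueSet_relabelHistory (hB : B.Finite) (hψ : Injective ψ) {h : History}
    (hnew : ∀ e, (e, false) ∈ h → Sym2.map ψ e ∉ B) :
    (blueSet B (relabelHistory ψ h)).ncard = B.ncard + {e | (e, false) ∈ h}.ncard := by
  rw [ncard_blueSet hB, setOf_mem_relabelHistory,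
    Set.ncard_image_of_injective _ (Sym2.map.injective hψ)]
  intro e he
  have he : e ∈ {e | (e, false) ∈ relabelHistory ψ h} := he
  rw [setOf_mem_relabelHistory] at he
  obtain ⟨e', he', rfl⟩ := he
  exact hnew e' he'

theorem image_blueSet_subset (hB : ∀ e ∈ B', Sym2.map ψ e ∈ B) (h : History) :
    Sym2.map ψ '' blueSet B' h ⊆ blueSet B (relabelHistory ψ h) := by
  rintro _ ⟨e, he | he, rfl⟩
  · exact Or.inl (hB e he)
  · exact Or.inr (List.mem_map_of_mem (f := Prod.map (Sym2.map ψ) id) he)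

end Relabel

def verts (E : Set Edge) : Set ℕ := {v | ∃ e ∈ E, v ∈ e}

theorem finite_verts {E : Set Edge} (hE : E.Finite) : (verts E).Finite := by
  refine (hE.biUnion fun e _ => ?_).subset fun v ⟨e, he, hv⟩ => Set.mem_biUnion he hv
  induction e using Sym2.ind with
  | _ a b => exact ((Set.finite_singleton b).insert a).subset fun v hv => by simpa using hv

theorem exists_injective_eqOn_forall_notMem {V A : Set ℕ} (hV : V.Finite) (hA : A.Finite) :
    ∃ ψ : ℕ → ℕ, Injective ψ ∧ (∀ v ∈ V, ψ v = v) ∧ ∀ v ∉ V, ψ v ∉ A := by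
  classical
  obtain ⟨M, hM⟩ := (hV.union hA).bddAbove
  have hlt : ∀ v ∈ V ∪ A, v < M + 1 := fun v hv => Nat.lt_succ_of_le (hM hv)
  refine ⟨fun v => if v ∈ V then v else v + (M + 1), fun a b hab => ?_, fun v hv => if_pos hv,
    fun v hv hA' => ?_⟩
  · dsimp only at hab
    split_ifs at hab with ha hb hb
    · exact hab
    · have := hlt a (Or.inl ha); omega
    · have := hlt b (Or.inl hb); omega
    · omega
  · dsimp only at hA'
    rw [if_neg hv] at hA'
    have := hlt _ (Or.inr hA'); omega

section Verts

variable {ψ : ℕ → ℕ} {E E' : Set Edge}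

theorem map_eq_self_of_forall_mem {e : Edge} (hfix : ∀ v ∈ e, ψ v = v) : Sym2.map ψ e = e :=
  (Sym2.map_congr hfix).trans (by rw [Sym2.map_id']; rfl)

theorem map_eq_self_of_mem (hfix : ∀ v ∈ verts E, ψ v = v) {e : Edge} (he : e ∈ E) :
    Sym2.map ψ e = e :=
  map_eq_self_of_forall_mem fun v hv => hfix v ⟨e, he, hv⟩

theorem map_notMem_of_notMem (hfix : ∀ v ∈ verts E', ψ v = v)
    (hout : ∀ v ∉ verts E', ψ v ∉ verts E) (hspan : ∀ e ∈ E, (∀ v ∈ e, v ∈ verts E') → e ∈ E')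
    {e : Edge} (he : e ∉ E') : Sym2.map ψ e ∉ E := by
  intro hmem
  by_cases hsp : ∀ v ∈ e, v ∈ verts E'
  · rw [map_eq_self_of_forall_mem fun v hv => hfix v (hsp v hv)] at hmem
    exact he (hspan e hmem hsp)
  · obtain ⟨v, hv, hvE'⟩ := by simpa only [not_forall, exists_prop] using hsp
    exact hout v hvE' ⟨_, hmem, Sym2.mem_map.mpr ⟨v, hv, rfl⟩⟩

end Verts

section Contraction

variable {k : ℕ} (R Bl : Set Edge) (u : Fin (k + 2) → ℕ)

def endEdge : Edge := s(u 0, u (Fin.last (k + 1)))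

def pathEdges : Set Edge := Set.range fun i : Fin (k + 1) => s(u i.castSucc, u i.succ)

def pathSeq : ℕ → ℕ := fun i => if h : i < k + 2 then u ⟨i, h⟩ else 0

/-- `contractRed R Bl u` and `contractBlue R Bl u` are the red and blue edges of the
contraction `H'`. -/
def contractRed : Set Edge := R \ (edgeNbhd R Bl (interiorVerts u) ∪ {endEdge u})

def contractBlue : Set Edge := (Bl \ edgeNbhd R Bl (interiorVerts u)) ∪ {endEdge u}

theorem contractRed_union_contractBlue :
    contractRed R Bl u ∪ contractBlue R Bl u =
      insert (endEdge u) ((R ∪ Bl) \ edgeNbhd R Bl (interiorVerts u)) := by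
  ext e
  simp only [contractRed, contractBlue, Set.mem_union, Set.mem_sdiff, Set.mem_insert_iff,
    Set.mem_singleton_iff]
  tauto

variable {R Bl u}

theorem notMem_interiorVerts_of_mem_endEdge (hu : Injective u) {v : ℕ} (hv : v ∈ endEdge u) :
    v ∉ interiorVerts u := by
  rintro ⟨i, h1, h2, rfl⟩
  rcases Sym2.mem_iff.mp hv with h | h <;> have := congrArg Fin.val (hu h) <;>
    simp only [Fin.val_zero, Fin.val_last] at this <;> omega

theorem endEdge_notMem_edgeNbhd (hu : Injective u) :
    endEdge u ∉ edgeNbhd R Bl (interiorVerts u) :=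
  fun ⟨_, _, hv, hve⟩ => notMem_interiorVerts_of_mem_endEdge hu hve hv

theorem one_le_of_endEdge_notMem (hblue : pathEdges u ⊆ Bl) (he : endEdge u ∉ Bl) : 1 ≤ k := by
  rcases Nat.eq_zero_or_pos k with rfl | hk
  · exact absurd (hblue ⟨0, rfl⟩) he
  · exact hk

theorem isPathSeq_pathSeq (hu : Injective u) (hblue : pathEdges u ⊆ Bl) :
    IsPathSeq Bl (k + 2) (pathSeq u) := by
  refine ⟨fun i hi j hj hij => ?_, fun i hi => ?_⟩
  · simp only [Set.mem_Iio] at hi hj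
    simpa [pathSeq, hi, hj] using congrArg Fin.val (hu (by simpa [pathSeq, hi, hj] using hij))
  · simp only [pathSeq, dif_pos hi, dif_pos (show i < k + 2 by omega)]
    exact hblue ⟨⟨i, by omega⟩, rfl⟩

theorem mem_interiorVerts_of_mem_pathEdges (hk : 1 ≤ k) {e : Edge} (he : e ∈ pathEdges u) :
    ∃ v ∈ interiorVerts u, v ∈ e := by
  obtain ⟨i, rfl⟩ := he
  by_cases hik : (i : ℕ) < k
  · exact ⟨_, ⟨i.succ, by simp, by simp; omega, rfl⟩, Sym2.mem_mk_right _ _⟩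
  · exact ⟨_, ⟨i.castSucc, by simp; omega, by simp; omega, rfl⟩, Sym2.mem_mk_left _ _⟩

theorem inter_edgeNbhd_eq_pathEdges (hk : 1 ≤ k) (hblue : pathEdges u ⊆ Bl)
    (hNblue : ∀ e ∈ Bl, e ∈ edgeNbhd R Bl (interiorVerts u) → e ∈ pathEdges u) :
    Bl ∩ edgeNbhd R Bl (interiorVerts u) = pathEdges u :=
  Set.Subset.antisymm (fun e ⟨hB, hN⟩ => hNblue e hB hN) fun _ he =>
    ⟨hblue he, Or.inr (hblue he), mem_interiorVerts_of_mem_pathEdges hk he⟩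

theorem ncard_pathEdges (hu : Injective u) : (pathEdges u).ncard = k + 1 := by
  rw [pathEdges, Set.ncard_range_of_injective, Nat.card_eq_fintype_card, Fintype.card_fin]
  intro i j hij
  rcases Sym2.eq_iff.mp hij with ⟨h, -⟩ | ⟨h1, h2⟩
  · exact Fin.castSucc_injective _ (hu h)
  · have := congrArg Fin.val (hu h1)
    have := congrArg Fin.val (hu h2)
    simp only [Fin.val_succ, Fin.val_castSucc] at *
    omega

theorem interiorVerts_subset_verts (hblue : pathEdges u ⊆ Bl) :
    interiorVerts u ⊆ verts (R ∪ Bl) := by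
  rintro _ ⟨i, h1, h2, rfl⟩
  have hsucc : (⟨i - 1, by omega⟩ : Fin (k + 1)).succ = i := by ext; simp; omega
  refine ⟨_, Or.inr (hblue ⟨⟨i - 1, by omega⟩, rfl⟩), ?_⟩
  dsimp only
  rw [hsucc]
  exact Sym2.mem_mk_right _ _

theorem disjoint_interiorVerts_verts_contract (hu : Injective u) :
    Disjoint (interiorVerts u) (verts (contractRed R Bl u ∪ contractBlue R Bl u)) := by
  rw [Set.disjoint_left]
  rintro v hv ⟨e, he, hve⟩
  rw [contractRed_union_contractBlue] at he
  rcases he with rfl | ⟨hRB, hN⟩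
  · exact notMem_interiorVerts_of_mem_endEdge hu hve hv
  · exact hN ⟨hRB, v, hv, hve⟩

theorem finite_contract (hR : R.Finite) (hB : Bl.Finite) :
    (contractRed R Bl u ∪ contractBlue R Bl u).Finite := by
  rw [contractRed_union_contractBlue]
  exact (hR.union hB).sdiff.insert _

theorem one_le_ncard_contract (hR : R.Finite) (hB : Bl.Finite) :
    1 ≤ (contractRed R Bl u ∪ contractBlue R Bl u).ncard := by
  rw [contractRed_union_contractBlue]
  exact Set.one_le_ncard_insert _ _ (hR.union hB).sdiff

open scoped Classical in
theorem ncard_le_ncard_contract_add (hR : R.Finite) (hB : Bl.Finite) (hu : Injective u)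
    (hcount : (edgeNbhd R Bl (interiorVerts u)).ncard +
      (if endEdge u ∈ R ∪ Bl then 1 else 0) ≤ 2 * k + 1) :
    (R ∪ Bl).ncard ≤ (contractRed R Bl u ∪ contractBlue R Bl u).ncard + 2 * k := by
  have hRB := hR.union hB
  have hN : edgeNbhd R Bl (interiorVerts u) ⊆ R ∪ Bl := fun e he => he.1
  have hNle := Set.ncard_le_ncard hN hRB
  rw [contractRed_union_contractBlue, Set.ncard_insert_eq_ite hRB.sdiff, Set.ncard_sdiff' hN hRB]
  split_ifs at hcount ⊢ with h1 h2 h2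
  · omega
  · exact absurd h1.1 h2
  · exact absurd ⟨h2, endEdge_notMem_edgeNbhd hu⟩ h1
  · omega

theorem exists_relabelling_contract (hR : R.Finite) (hB : Bl.Finite) (hu : Injective u)
    (hblue : pathEdges u ⊆ Bl) :
    ∃ ψ : ℕ → ℕ, Injective ψ ∧
      (∀ v ∈ verts (contractRed R Bl u ∪ contractBlue R Bl u), ψ v = v) ∧
      (∀ e ∉ contractRed R Bl u ∪ contractBlue R Bl u, Sym2.map ψ e ∉ R ∪ Bl) ∧
      ∀ x, ψ x ∉ interiorVerts u := by
  have hdisj := Set.disjoint_left.mp (disjoint_interiorVerts_verts_contract (R := R) (Bl := Bl) hu)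
  obtain ⟨ψ, hψ, hfix, hout⟩ := exists_injective_eqOn_forall_notMem
    (finite_verts (finite_contract hR hB)) (finite_verts (hR.union hB))
  refine ⟨ψ, hψ, hfix, fun e he => map_notMem_of_notMem hfix hout (fun f hf hspan => ?_) he,
    fun x hx => ?_⟩
  · rw [contractRed_union_contractBlue]
    exact Or.inr ⟨hf, fun ⟨_, v, hv, hvf⟩ => hdisj hv (hspan v hvf)⟩
  · by_cases hxV : x ∈ verts (contractRed R Bl u ∪ contractBlue R Bl u)
    · rw [hfix x hxV] at hx
      exact hdisj hx hxV
    · exact hout x hxV (interiorVerts_subset_verts hblue hx)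

theorem ncard_blueSet_relabelHistory_contract (hB : Bl.Finite) (hu : Injective u)
    (hblue : pathEdges u ⊆ Bl)
    (hNblue : ∀ e ∈ Bl, e ∈ edgeNbhd R Bl (interiorVerts u) → e ∈ pathEdges u)
    (he₀ : endEdge u ∉ Bl) {ψ : ℕ → ℕ} (hψ : Injective ψ)
    (hfresh : ∀ e ∉ contractRed R Bl u ∪ contractBlue R Bl u, Sym2.map ψ e ∉ R ∪ Bl)
    {h : History} (hnew : ∀ e, (e, false) ∈ h → e ∉ contractRed R Bl u ∪ contractBlue R Bl u) :
    (blueSet Bl (relabelHistory ψ h)).ncard = (blueSet (contractBlue R Bl u) h).ncard + k := by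
  set N := edgeNbhd R Bl (interiorVerts u)
  have hBl : Bl.ncard = (Bl \ N).ncard + (k + 1) := by
    rw [← Set.ncard_inter_add_ncard_sdiff_eq_ncard Bl N hB,
      inter_edgeNbhd_eq_pathEdges (one_le_of_endEdge_notMem hblue he₀) hblue hNblue,
      ncard_pathEdges hu, add_comm]
  have hBl' : (contractBlue R Bl u).ncard = (Bl \ N).ncard + 1 := by
    rw [contractBlue, Set.union_singleton, Set.ncard_insert_of_notMem (fun h => he₀ h.1) hB.sdiff]
  have hB' : (contractBlue R Bl u).Finite := hB.sdiff.union (Set.finite_singleton _)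
  rw [ncard_blueSet_relabelHistory hB hψ fun e he hmem => hfresh e (hnew e he) (Or.inr hmem),
    ncard_blueSet hB' fun e he hmem => hnew e he (Or.inr hmem), hBl, hBl']
  ring

theorem hasCopy_pathGraph_relabelHistory_contract (hB : Bl.Finite) (hu : Injective u)
    (hblue : pathEdges u ⊆ Bl) {ψ : ℕ → ℕ} (hψ : Injective ψ)
    (hfix : ∀ v ∈ verts (contractRed R Bl u ∪ contractBlue R Bl u), ψ v = v)
    (havoid : ∀ x, ψ x ∉ interiorVerts u) {h : History} {m : ℕ}
    (hcard : (blueSet (contractBlue R Bl u) h).ncard = m - 1)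
    (hcopy : HasCopy (SimpleGraph.pathGraph m)
      (SimpleGraph.fromEdgeSet (blueSet (contractBlue R Bl u) h))) :
    HasCopy (SimpleGraph.pathGraph (m + k))
      (SimpleGraph.fromEdgeSet (blueSet Bl (relabelHistory ψ h))) := by
  have hfixB' : ∀ e ∈ contractBlue R Bl u, Sym2.map ψ e = e :=
    fun e he => map_eq_self_of_mem (fun v ⟨f, hf, hv⟩ => hfix v ⟨f, Or.inr hf, hv⟩) he
  obtain ⟨c, hc⟩ := hcopy.exists_isPathSeq
  obtain ⟨j, hj, hje⟩ := hc.exists_edge_eq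
    ((hB.sdiff.union (Set.finite_singleton _)).union (finite_setOf_mem_history h false)) hcard
    (Or.inl (Or.inr rfl) : endEdge u ∈ blueSet (contractBlue R Bl u) h)
  have hcG : ∀ i, i + 1 < m → i ≠ j →
      s((ψ ∘ c) i, (ψ ∘ c) (i + 1)) ∈ blueSet Bl (relabelHistory ψ h) := by
    intro i hi hij
    have hne : s(c i, c (i + 1)) ≠ endEdge u := fun he => hij (hc.edge_inj hi hj (he.trans hje))
    refine image_blueSet_subset (B' := Bl \ edgeNbhd R Bl (interiorVerts u))
      (fun e he => (hfixB' e (Or.inl he)).symm ▸ he.1) h ⟨s(c i, c (i + 1)), ?_, rfl⟩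
    rcases hc.2 i hi with (he | he) | he
    · exact Or.inl he
    · exact absurd he hne
    · exact Or.inr he
  have hends : s(pathSeq u 0, pathSeq u (k + 1)) = s((ψ ∘ c) j, (ψ ∘ c) (j + 1)) := by
    change _ = Sym2.map ψ s(c j, c (j + 1))
    rw [← hje, hfixB' _ (Or.inr rfl)]
    simp [pathSeq, endEdge, Fin.last]
  have hdisj : ∀ i, 1 ≤ i → i ≤ k → ∀ l < m, pathSeq u i ≠ (ψ ∘ c) l := by
    intro i h1 h2 l _ he
    refine havoid (c l) ⟨⟨i, by omega⟩, h1, h2, ?_⟩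
    simp only [← Function.comp_apply (f := ψ), ← he, pathSeq, dif_pos (show i < k + 2 by omega)]
  obtain ⟨g, hg⟩ := exists_isPathSeq_splice (hψ.comp_injOn hc.1) hcG
    ((isPathSeq_pathSeq hu hblue).mono Set.subset_union_left) hj hends hdisj
  exact hg.hasCopy

end Contraction

open scoped Classical in
theorem RR_win_of_contraction_general (n k : ℕ) (R Bl : Set Edge)
    (hRfin : R.Finite) (hBlfin : Bl.Finite) (hdisj : Disjoint R Bl)
    (u : Fin (k + 2) → ℕ) (hu : Function.Injective u)
    (hblue : ∀ i : Fin (k + 1), s(u i.castSucc, u i.succ) ∈ Bl)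
    (hend : s(u 0, u (Fin.last (k + 1))) ∉ R ∪ Bl ∨
      s(u 0, u (Fin.last (k + 1))) ∈ R)
    (hNnotblue : ∀ e ∈ Bl, e ∈ edgeNbhd R Bl (interiorVerts u) →
      ∃ i : Fin (k + 1), e = s(u i.castSucc, u i.succ))
    (hcount : (edgeNbhd R Bl (interiorVerts u)).ncard +
        (if s(u 0, u (Fin.last (k + 1))) ∈ R ∪ Bl then 1 else 0) ≤ 2 * k + 1)
    (hwin' : RRWin (n - k)
      (R \ (edgeNbhd R Bl (interiorVerts u) ∪ {s(u 0, u (Fin.last (k + 1)))}))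
      ((Bl \ edgeNbhd R Bl (interiorVerts u)) ∪ {s(u 0, u (Fin.last (k + 1)))})) :
    RRWin n R Bl := by
  change RRWin (n - k) (contractRed R Bl u) (contractBlue R Bl u) at hwin'
  change endEdge u ∉ R ∪ Bl ∨ endEdge u ∈ R at hend
  obtain ⟨hsize', S', hS', hwin'⟩ := hwin'
  have hpath : pathEdges u ⊆ Bl := Set.range_subset_iff.mpr hblue
  have hNpath e he hN : e ∈ pathEdges u := (hNnotblue e he hN).imp fun _ h => h.symm
  have he₀ : endEdge u ∉ Bl :=
    hend.elim (fun h hB => h (Or.inr hB)) fun h => Set.disjoint_left.mp hdisj h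
  have hsize := ncard_le_ncard_contract_add hRfin hBlfin hu hcount
  have hpos := one_le_ncard_contract (u := u) hRfin hBlfin
  obtain ⟨ψ, hψ, hfix, hfresh, havoid⟩ := exists_relabelling_contract hRfin hBlfin hu hpath
  refine ⟨by omega, relabelStrategy R Bl ψ S' _,
    builderLegal_relabelStrategy hRfin hBlfin hψ hfresh hS' _, fun P hP => ?_⟩
  obtain ⟨t, ht, hcard, hcopy⟩ := hwin' _ (painterLegal_relabelPainter hψ
    (fun e he => (map_eq_self_of_mem hfix (Or.inl he)).symm ▸ he.1) hP)
  refine ⟨t, by omega, ?_⟩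
  rw [gamePlay_relabelStrategy hψ S' P ht]
  refine ⟨?_, ?_⟩
  · rw [ncard_blueSet_relabelHistory_contract hBlfin hu hpath hNpath he₀ hψ hfresh
      fun e he => hS'.notMem_of_mem_gamePlay _ ht he, hcard]
    omega
  · have := hasCopy_pathGraph_relabelHistory_contract hBlfin hu hpath hψ hfix havoid hcard hcopy
    rwa [Nat.sub_add_cancel (by omega)] at this

open scoped Classical in
/-- The contraction lemma: if `H` contains a blue path `P = u₀u₁⋯u_{k+1}` whose
ends are non-adjacent or joined by a red edge, no edge of
`N_H({u₁,…,u_k}) ∖ E(P)` is blue, and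
`|N_H({u₁,…,u_k})| + δ_H(u₀,u_{k+1}) ≤ 2k + 1`, then a winning strategy for
Builder in `RR(C₄, P_{n-k}, H')`, where `H'` is obtained from `H` by contracting
`P` to the (blue) edge `u₀u_{k+1}`, yields a winning strategy for Builder in
`RR(C₄, Pₙ, H)`. -/
theorem RR_win_of_contraction (n k : ℕ) (R Bl : Set Edge)
    (hRfin : R.Finite) (hBlfin : Bl.Finite) (hdisj : Disjoint R Bl)
    (hloop : ∀ e ∈ R ∪ Bl, ¬ e.IsDiag)
    (u : Fin (k + 2) → ℕ) (hu : Function.Injective u)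
    (hblue : ∀ i : Fin (k + 1), s(u i.castSucc, u i.succ) ∈ Bl)
    (hend : s(u 0, u (Fin.last (k + 1))) ∉ R ∪ Bl ∨
      s(u 0, u (Fin.last (k + 1))) ∈ R)
    (hNnotblue : ∀ e ∈ Bl, e ∈ edgeNbhd R Bl (interiorVerts u) →
      ∃ i : Fin (k + 1), e = s(u i.castSucc, u i.succ))
    (hcount : (edgeNbhd R Bl (interiorVerts u)).ncard +
        (if s(u 0, u (Fin.last (k + 1))) ∈ R ∪ Bl then 1 else 0) ≤ 2 * k + 1)
    (hwin' : RRWin (n - k)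
      (R \ (edgeNbhd R Bl (interiorVerts u) ∪ {s(u 0, u (Fin.last (k + 1)))}))
      ((Bl \ edgeNbhd R Bl (interiorVerts u)) ∪ {s(u 0, u (Fin.last (k + 1)))})) :
    RRWin n R Bl :=
  RR_win_of_contraction_general n k R Bl hRfin hBlfin hdisj u hu hblue hend hNnotblue hcount hwin'

end OnlineRamsey
end

section
/- Let s ≥ 1 and let H be an (s,s)-butterfly with centres (u0,u1). Then there exists a path Q in the complete graph on V(H) whose vertex set is all of V(H), whose ends are u0 and u1, and each of whose edges joins two vertices that are the ends of a path with exactly three edges in H (in particular, no edge of Q is an edge of H). -/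
/-!
The `(p, q)`-butterfly with centres `(u₀, u₁)`, realised as a graph on `ℕ` with
`u₀ = 0`, `u₁ = 1`, `u₂ = 2`, `u₃ = 3`, `u₄ = 4`, `u₅ = 5`, wing vertices
`xᵢ = 5 + i` (`1 ≤ i ≤ p`) and `yⱼ = 5 + p + j` (`1 ≤ j ≤ q`): its edges are those
of the path `u₄u₂u₀u₁u₃u₅` together with the `u₀`-wing edges `u₀xᵢ` and the
`u₁`-wing edges `u₁yⱼ`.  Its vertex set is `{0, 1, …, 5 + p + q}`.
-/

namespace Butterfly

/-- The edges of the `(p, q)`-butterfly. -/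
def butterflyEdges (p q : ℕ) : Set (Sym2 ℕ) :=
  {s(4, 2), s(2, 0), s(0, 1), s(1, 3), s(3, 5)} ∪
    {e | ∃ i : ℕ, 1 ≤ i ∧ i ≤ p ∧ e = s(0, 5 + i)} ∪
    {e | ∃ j : ℕ, 1 ≤ j ∧ j ≤ q ∧ e = s(1, 5 + p + j)}

/-- The `(p, q)`-butterfly with centres `(0, 1)`, as a simple graph on `ℕ`. -/
def butterfly (p q : ℕ) : SimpleGraph ℕ :=
  SimpleGraph.fromEdgeSet (butterflyEdges p q)

/-- `x` and `y` are the two ends of a path with exactly three edges in `H`. -/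
def Linked3 (H : SimpleGraph ℕ) (x y : ℕ) : Prop :=
  ∃ a b : ℕ, H.Adj x a ∧ H.Adj a b ∧ H.Adj b y ∧ x ≠ b ∧ a ≠ y ∧ x ≠ y

lemma badj {p q a b : ℕ} (h : s(a,b) ∈ butterflyEdges p q) (hne : a ≠ b) :
    (butterfly p q).Adj a b := by
  rw [butterfly, SimpleGraph.fromEdgeSet_adj]; exact ⟨h, hne⟩

lemma adj01 (p q : ℕ) : (butterfly p q).Adj 0 1 :=
  badj (by left; left; simp) (by omega)

lemma adj13 (p q : ℕ) : (butterfly p q).Adj 1 3 :=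
  badj (by left; left; simp) (by omega)

lemma adj35 (p q : ℕ) : (butterfly p q).Adj 3 5 :=
  badj (by left; left; simp) (by omega)

lemma adj20 (p q : ℕ) : (butterfly p q).Adj 2 0 :=
  badj (by left; left; simp) (by omega)

lemma adj42 (p q : ℕ) : (butterfly p q).Adj 4 2 :=
  badj (by left; left; simp) (by omega)

lemma adj0x {p q x : ℕ} (h1 : 6 ≤ x) (h2 : x ≤ 5 + p) : (butterfly p q).Adj 0 x := by
  refine badj ?_ (by omega)
  left; right
  refine ⟨x - 5, by omega, by omega, ?_⟩
  have : 5 + (x - 5) = x := by omega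
  rw [this]

lemma adj1y {p q y : ℕ} (h1 : 6 + p ≤ y) (h2 : y ≤ 5 + p + q) : (butterfly p q).Adj 1 y := by
  refine badj ?_ (by omega)
  right
  refine ⟨y - 5 - p, by omega, by omega, ?_⟩
  have : 5 + p + (y - 5 - p) = y := by omega
  rw [this]

section
variable {p : ℕ}

local notation "L" => Linked3 (butterfly p p)

lemma l3_05 : L 0 5 :=
  ⟨1, 3, adj01 p p, adj13 p p, adj35 p p, by omega, by omega, by omega⟩

lemma l3_41 : L 4 1 :=
  ⟨2, 0, adj42 p p, adj20 p p, adj01 p p, by omega, by omega, by omega⟩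

lemma l3_23 : L 2 3 :=
  ⟨0, 1, adj20 p p, adj01 p p, adj13 p p, by omega, by omega, by omega⟩

lemma l3_5y {y : ℕ} (h1 : 6 + p ≤ y) (h2 : y ≤ 5 + p + p) : L 5 y :=
  ⟨3, 1, (adj35 p p).symm, (adj13 p p).symm, adj1y h1 h2, by omega, by omega, by omega⟩

lemma l3_xy {x y : ℕ} (hx1 : 6 ≤ x) (hx2 : x ≤ 5 + p)
    (h1 : 6 + p ≤ y) (h2 : y ≤ 5 + p + p) : L x y :=
  ⟨0, 1, (adj0x hx1 hx2).symm, adj01 p p, adj1y h1 h2, by omega, by omega, by omega⟩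

lemma l3_yx {x y : ℕ} (hx1 : 6 ≤ x) (hx2 : x ≤ 5 + p)
    (h1 : 6 + p ≤ y) (h2 : y ≤ 5 + p + p) : L y x :=
  ⟨1, 0, (adj1y h1 h2).symm, (adj01 p p).symm, adj0x hx1 hx2, by omega, by omega, by omega⟩

lemma l3_y2 {y : ℕ} (h1 : 6 + p ≤ y) (h2 : y ≤ 5 + p + p) : L y 2 :=
  ⟨1, 0, (adj1y h1 h2).symm, (adj01 p p).symm, (adj20 p p).symm, by omega, by omega, by omega⟩

lemma l3_3x {x : ℕ} (hx1 : 6 ≤ x) (hx2 : x ≤ 5 + p) : L 3 x :=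
  ⟨1, 0, (adj13 p p).symm, (adj01 p p).symm, adj0x hx1 hx2, by omega, by omega, by omega⟩

lemma l3_x4 {x : ℕ} (hx1 : 6 ≤ x) (hx2 : x ≤ 5 + p) : L x 4 :=
  ⟨0, 2, (adj0x hx1 hx2).symm, (adj20 p p).symm, (adj42 p p).symm, by omega, by omega, by omega⟩

end

/-- the tail of the spanning path: `y_{k+1}, x_{k+1}, …, y_2, x_2, y_1, 2, 3, x_1, 4, 1` -/
def mid (p : ℕ) : ℕ → List ℕ
  | 0 => [6 + p, 2, 3, 6, 4, 1]
  | k+1 => (7 + p + k) :: (7 + k) :: mid p k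

lemma mem_mid (p : ℕ) : ∀ k n, n ∈ mid p k ↔
    (n = 1 ∨ n = 2 ∨ n = 3 ∨ n = 4 ∨ (6 ≤ n ∧ n ≤ 6 + k) ∨
      (6 + p ≤ n ∧ n ≤ 6 + p + k)) := by
  intro k
  induction k with
  | zero => intro n; simp [mid]; omega
  | succ k ih => intro n; simp only [mid, List.mem_cons, ih]; omega

lemma nodup_mid (p : ℕ) (hp : 1 ≤ p) : ∀ k, k ≤ p - 1 → (mid p k).Nodup := by
  intro k
  induction k with
  | zero => intro _; simp [mid]; omega
  | succ k ih =>
    intro hk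
    simp only [mid, List.nodup_cons, mem_mid, List.mem_cons]
    refine ⟨by omega, by omega, ih (by omega)⟩

lemma chain_mid (p : ℕ) (hp : 1 ≤ p) : ∀ k, k ≤ p - 1 → ∀ c,
    (∀ n, 6 + p ≤ n → n ≤ 5 + p + p → Linked3 (butterfly p p) c n) →
    List.Chain (Linked3 (butterfly p p)) c (mid p k) := by
  intro k
  induction k with
  | zero =>
    intro _ c hc
    refine List.Chain.cons (hc (6 + p) (by omega) (by omega)) ?_
    refine List.Chain.cons (l3_y2 (by omega) (by omega)) ?_
    refine List.Chain.cons l3_23 ?_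
    refine List.Chain.cons (l3_3x (by omega) (by omega)) ?_
    refine List.Chain.cons (l3_x4 (by omega) (by omega)) ?_
    exact List.Chain.cons l3_41 List.Chain.nil
  | succ k ih =>
    intro hk c hc
    refine List.Chain.cons (hc (7 + p + k) (by omega) (by omega)) ?_
    refine List.Chain.cons (l3_yx (by omega) (by omega) (by omega) (by omega)) ?_
    exact ih (by omega) (7 + k) fun n h1 h2 => l3_xy (by omega) (by omega) h1 h2

lemma getLast?_cons_ne {α : Type*} (a : α) {l : List α} (h : l ≠ []) :
    (a :: l).getLast? = l.getLast? := by
  cases l with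
  | nil => exact absurd rfl h
  | cons b t => rw [List.getLast?_cons_cons]

lemma mid_ne_nil (p k : ℕ) : mid p k ≠ [] := by
  cases k <;> simp [mid]

lemma getLast_mid (p : ℕ) : ∀ k, (mid p k).getLast? = some 1 := by
  intro k
  induction k with
  | zero => simp [mid]
  | succ k ih =>
    simp only [mid]
    rw [List.getLast?_cons_cons, getLast?_cons_ne _ (mid_ne_nil p k)]
    exact ih

/-- For `p ≥ 1` there is a path `Q` in the complete graph on the vertex set of the
`(p, p)`-butterfly `H` that visits every vertex of `H`, has ends `u₀` and `u₁`, and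
each of whose edges joins two vertices that are the ends of a path with exactly
three edges in `H`. -/
theorem butterfly_spanning_path_u0_u1 (p : ℕ) (hp : 1 ≤ p) :
    ∃ l : List ℕ, l.Nodup ∧ l.toFinset = Finset.range (6 + p + p) ∧
      l.head? = some 0 ∧ l.getLast? = some 1 ∧
      l.Chain' (Linked3 (butterfly p p)) := by
  refine ⟨0 :: 5 :: mid p (p - 1), ?_, ?_, rfl, ?_, ?_⟩
  · simp only [List.nodup_cons, List.mem_cons, mem_mid]
    refine ⟨by omega, by omega, nodup_mid p hp (p - 1) le_rfl⟩
  · ext n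
    simp only [List.mem_toFinset, List.mem_cons, mem_mid, Finset.mem_range]
    omega
  · rw [List.getLast?_cons_cons]
    rw [getLast?_cons_ne _ (mid_ne_nil p (p - 1))]
    exact getLast_mid p (p - 1)
  · show List.Chain (Linked3 (butterfly p p)) 0 (5 :: mid p (p - 1))
    refine List.Chain.cons l3_05 ?_
    exact chain_mid p hp (p - 1) le_rfl 5 fun n h1 h2 => l3_5y h1 h2


end Butterfly
end

section
/- Let s ≥ 2 and let H be an (s,s)-butterfly with centres (u0,u1). Then there exist a vertex y ∈ {y1,…,ys} and a path Q in the complete graph on V(H) whose vertex set is exactly V(H) ∖ {u1}, whose ends are u0 and y, and each of whose edges joins two vertices that are the ends of a path with exactly three edges in H (in particular, no edge of Q is an edge of H). -/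
/-!
The `(p, q)`-butterfly with centres `(u₀, u₁)`, realised as a graph on `ℕ` with
`u₀ = 0`, `u₁ = 1`, `u₂ = 2`, `u₃ = 3`, `u₄ = 4`, `u₅ = 5`, wing vertices
`xᵢ = 5 + i` (`1 ≤ i ≤ p`) and `yⱼ = 5 + p + j` (`1 ≤ j ≤ q`): its edges are those
of the path `u₄u₂u₀u₁u₃u₅` together with the `u₀`-wing edges `u₀xᵢ` and the
`u₁`-wing edges `u₁yⱼ`.  Its vertex set is `{0, 1, …, 5 + p + q}`.
-/

namespace Butterfly

/-!
The path is `u₀, u₅, y_p, u₂, u₃, x₁, u₄, x₂, y₁, x₃, y₂, …, x_p, y_{p-1}`. The ends of each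
of its edges are joined in `H` by a path with three edges through the centres: `u₀u₁u₃u₅`,
`u₅u₃u₁y`, `yu₁u₀u₂`, `u₂u₀u₁u₃`, `u₃u₁u₀x`, `xu₀u₂u₄`, and `xu₀u₁y` for every `x` in the
`u₀`-wing and `y` in the `u₁`-wing.
-/

theorem _root_.List.isChain_cons_flatMap_pair {α ι : Type*} {R : α → α → Prop} {A B : Set α}
    (hAB : ∀ a ∈ A, ∀ b ∈ B, R a b) (hBA : ∀ b ∈ B, ∀ a ∈ A, R b a)
    {f g : ι → α} {l : List ι} (hf : ∀ i ∈ l, f i ∈ A) (hg : ∀ i ∈ l, g i ∈ B)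
    {c : α} (hc : ∀ a ∈ A, R c a) :
    (c :: l.flatMap fun i => [f i, g i]).IsChain R := by
  induction l generalizing c with
  | nil => exact List.isChain_singleton c
  | cons i l ih =>
    have hfi := hf i List.mem_cons_self
    have hgi := hg i List.mem_cons_self
    refine List.isChain_cons_cons.2 ⟨hc _ hfi, List.isChain_cons_cons.2 ⟨hAB _ hfi _ hgi, ?_⟩⟩
    exact ih (fun j hj => hf j (List.mem_cons_of_mem i hj))
      (fun j hj => hg j (List.mem_cons_of_mem i hj)) (hBA _ hgi)

theorem Linked3.symm {H : SimpleGraph ℕ} {x y : ℕ} (h : Linked3 H x y) : Linked3 H y x := by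
  obtain ⟨a, b, hxa, hab, hby, hxb, hay, hxy⟩ := h
  exact ⟨b, a, hby.symm, hab.symm, hxa.symm, hay.symm, hxb.symm, hxy.symm⟩

section Linked

variable {p q : ℕ}

theorem butterfly_adj_zero_one : (butterfly p q).Adj 0 1 := by
  simp [butterfly, butterflyEdges]

theorem butterfly_adj_zero_two : (butterfly p q).Adj 0 2 := by
  simp [butterfly, butterflyEdges, Sym2.eq_swap]

theorem butterfly_adj_two_four : (butterfly p q).Adj 2 4 := by
  simp [butterfly, butterflyEdges, Sym2.eq_swap]

theorem butterfly_adj_one_three : (butterfly p q).Adj 1 3 := by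
  simp [butterfly, butterflyEdges]

theorem butterfly_adj_three_five : (butterfly p q).Adj 3 5 := by
  simp [butterfly, butterflyEdges]

theorem butterfly_adj_zero_of_mem_wing {x : ℕ} (hx : x ∈ Set.Icc 6 (5 + p)) :
    (butterfly p q).Adj 0 x := by
  obtain ⟨h6, hp⟩ := hx
  simp only [butterfly, SimpleGraph.fromEdgeSet_adj, butterflyEdges]
  exact ⟨Or.inl (Or.inr ⟨x - 5, by omega, by omega, by rw [Nat.add_sub_cancel' (by omega)]⟩),
    by omega⟩

theorem butterfly_adj_one_of_mem_wing {y : ℕ} (hy : y ∈ Set.Icc (6 + p) (5 + p + q)) :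
    (butterfly p q).Adj 1 y := by
  obtain ⟨h6, hq⟩ := hy
  simp only [butterfly, SimpleGraph.fromEdgeSet_adj, butterflyEdges]
  exact ⟨Or.inr ⟨y - (5 + p), by omega, by omega, by rw [Nat.add_sub_cancel' (by omega)]⟩,
    by omega⟩

theorem linked3_zero_five : Linked3 (butterfly p q) 0 5 :=
  ⟨1, 3, butterfly_adj_zero_one, butterfly_adj_one_three, butterfly_adj_three_five,
    by omega, by omega, by omega⟩

theorem linked3_two_three : Linked3 (butterfly p q) 2 3 :=
  ⟨0, 1, butterfly_adj_zero_two.symm, butterfly_adj_zero_one, butterfly_adj_one_three,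
    by omega, by omega, by omega⟩

theorem linked3_five_of_mem_wing {y : ℕ} (hy : y ∈ Set.Icc (6 + p) (5 + p + q)) :
    Linked3 (butterfly p q) 5 y :=
  ⟨3, 1, butterfly_adj_three_five.symm, butterfly_adj_one_three.symm,
    butterfly_adj_one_of_mem_wing hy, by omega, by grind, by grind⟩

theorem linked3_of_mem_wing_two {y : ℕ} (hy : y ∈ Set.Icc (6 + p) (5 + p + q)) :
    Linked3 (butterfly p q) y 2 :=
  ⟨1, 0, (butterfly_adj_one_of_mem_wing hy).symm, butterfly_adj_zero_one.symm,
    butterfly_adj_zero_two, by grind, by omega, by grind⟩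

theorem linked3_three_of_mem_wing {x : ℕ} (hx : x ∈ Set.Icc 6 (5 + p)) :
    Linked3 (butterfly p q) 3 x :=
  ⟨1, 0, butterfly_adj_one_three.symm, butterfly_adj_zero_one.symm,
    butterfly_adj_zero_of_mem_wing hx, by omega, by grind, by grind⟩

theorem linked3_four_of_mem_wing {x : ℕ} (hx : x ∈ Set.Icc 6 (5 + p)) :
    Linked3 (butterfly p q) 4 x :=
  ⟨2, 0, butterfly_adj_two_four.symm, butterfly_adj_zero_two.symm,
    butterfly_adj_zero_of_mem_wing hx, by omega, by grind, by grind⟩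

theorem linked3_of_mem_wings {x y : ℕ} (hx : x ∈ Set.Icc 6 (5 + p))
    (hy : y ∈ Set.Icc (6 + p) (5 + p + q)) : Linked3 (butterfly p q) x y :=
  ⟨0, 1, (butterfly_adj_zero_of_mem_wing hx).symm, butterfly_adj_zero_one,
    butterfly_adj_one_of_mem_wing hy, by grind, by grind, by grind⟩

end Linked

def spanningPath (p : ℕ) : List ℕ :=
  [0, 5, 5 + p + p, 2, 3, 6] ++ 4 :: (List.range (p - 1)).flatMap fun i => [7 + i, 6 + p + i]

section SpanningPath

variable {p : ℕ}

theorem mem_spanningPath (hp : 1 ≤ p) {v : ℕ} : v ∈ spanningPath p ↔ v < 6 + p + p ∧ v ≠ 1 := by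
  simp only [spanningPath, List.mem_append, List.mem_cons, List.mem_flatMap, List.mem_range,
    List.not_mem_nil, or_false]
  constructor
  · rintro ((h | h | h | h | h | h) | h | ⟨i, hi, h | h⟩) <;> omega
  · intro hv
    by_cases hx : 7 ≤ v ∧ v ≤ 5 + p
    · exact Or.inr (Or.inr ⟨v - 7, by omega, Or.inl (by omega)⟩)
    by_cases hy : 6 + p ≤ v ∧ v ≤ 4 + p + p
    · exact Or.inr (Or.inr ⟨v - (6 + p), by omega, Or.inr (by omega)⟩)
    omega

theorem length_spanningPath (hp : 1 ≤ p) : (spanningPath p).length = 5 + p + p := by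
  simp only [spanningPath, List.length_append, List.length_cons, List.length_flatMap,
    List.length_nil, List.map_const', List.length_range, List.sum_replicate, smul_eq_mul]
  omega

theorem toFinset_spanningPath (hp : 1 ≤ p) :
    (spanningPath p).toFinset = (Finset.range (6 + p + p)).erase 1 := by
  ext v
  simp [mem_spanningPath hp, and_comm]

theorem nodup_spanningPath (hp : 1 ≤ p) : (spanningPath p).Nodup := by
  refine (Multiset.toFinset_card_eq_card_iff_nodup (m := (spanningPath p : Multiset ℕ))).1 ?_
  change (spanningPath p).toFinset.card = (spanningPath p).length
  rw [toFinset_spanningPath hp, length_spanningPath hp, Finset.card_erase_of_mem (by simp; omega),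
    Finset.card_range]
  omega

theorem getLast?_spanningPath (hp : 2 ≤ p) : (spanningPath p).getLast? = some (4 + p + p) := by
  obtain ⟨n, rfl⟩ : ∃ n, p = n + 2 := ⟨p - 2, by omega⟩
  rw [spanningPath, List.getLast?_append, List.getLast?_cons, show n + 2 - 1 = n + 1 by omega,
    List.range_succ, List.flatMap_append]
  simp only [List.flatMap_cons, List.flatMap_nil, List.append_nil, List.getLast?_append,
    List.getLast?_cons_cons, List.getLast?_singleton, Option.some_or, Option.getD_some,
    Option.some.injEq]
  omega

theorem isChain_spanningPath (hp : 1 ≤ p) :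
    (spanningPath p).IsChain (Linked3 (butterfly p p)) := by
  have hx₁ : 6 ∈ Set.Icc 6 (5 + p) := ⟨le_rfl, by omega⟩
  have hyₚ : 5 + p + p ∈ Set.Icc (6 + p) (5 + p + p) := ⟨by omega, le_rfl⟩
  refine List.IsChain.append ?_ ?_ ?_
  · simp only [List.isChain_cons_cons, List.isChain_singleton, and_true]
    exact ⟨linked3_zero_five, linked3_five_of_mem_wing hyₚ, linked3_of_mem_wing_two hyₚ,
      linked3_two_three, linked3_three_of_mem_wing hx₁⟩
  · refine List.isChain_cons_flatMap_pair (fun x hx y hy => linked3_of_mem_wings hx hy)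
      (fun y hy x hx => (linked3_of_mem_wings hx hy).symm) ?_ ?_
      (fun x hx => linked3_four_of_mem_wing hx)
    all_goals
      intro i hi
      rw [List.mem_range] at hi
      exact ⟨by omega, by omega⟩
  · rintro x hx y hy
    obtain rfl : x = 6 := by simpa using hx.symm
    obtain rfl : y = 4 := by simpa using hy.symm
    exact (linked3_four_of_mem_wing hx₁).symm

end SpanningPath

/-- For `p ≥ 2` there are a vertex `y` of the `u₁`-wing of the `(p, p)`-butterfly `H`
and a path `Q` in the complete graph on `V(H)` that visits exactly the vertices of
`V(H) ∖ {u₁}`, has ends `u₀` and `y`, and each of whose edges joins two vertices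
that are the ends of a path with exactly three edges in `H`. -/
theorem butterfly_spanning_path_u0_wing (p : ℕ) (hp : 2 ≤ p) :
    ∃ y : ℕ, 6 + p ≤ y ∧ y ≤ 5 + p + p ∧
      ∃ l : List ℕ, l.Nodup ∧ l.toFinset = (Finset.range (6 + p + p)).erase 1 ∧
        l.head? = some 0 ∧ l.getLast? = some y ∧
        l.Chain' (Linked3 (butterfly p p)) :=
  ⟨4 + p + p, by omega, by omega, spanningPath p, nodup_spanningPath (by omega),
    toFinset_spanningPath (by omega), rfl, getLast?_spanningPath hp,
    isChain_spanningPath (by omega)⟩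

end Butterfly
end

section
/- Let s ≥ 2 and let G be the graph obtained from the complete bipartite graph K_{s+2,s+2}, with parts A = {a1,…,a_{s+2}} and B = {b1,…,b_{s+2}}, by deleting the three edges a_{s+1}b_{s+1}, b_{s+1}a_{s+2} and a_{s+2}b_{s+2} (the edges of the path a_{s+1} b_{s+1} a_{s+2} b_{s+2} on four vertices). Then G is Hamilton-laceable: for every u ∈ A and every v ∈ B there exists a Hamiltonian path of G with ends u and v. -/
/-!
An index `i : Fin (p + 2)` is generic when `i < p`: then `inl i` and `inr i` are adjacent to the
whole opposite part, since the deleted edges only join indices `p` and `p + 1`. Hence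
Hamilton-laceability passes from `p` to `p + 1`: choose generic indices `k`, `l` of the larger
graph with `inl k ≠ u` and `inr l ≠ v`, take a Hamiltonian path from `u` to `v` in the smaller
graph, embedded by skipping `inl k` and `inr l` (`Fin.succAbove`), and insert `inr l, inl k` right
after `u`. The base case `p = 2` (`K_{4,4}` minus a `P_4`) is settled by sixteen explicit paths.
-/

/-- `K_{p+2,p+2}` minus the edges of the path `a_{p+1} b_{p+1} a_{p+2} b_{p+2}`. -/
def bipartiteMinusPath (p : ℕ) : SimpleGraph (Fin (p + 2) ⊕ Fin (p + 2)) :=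
  (completeBipartiteGraph (Fin (p + 2)) (Fin (p + 2))).deleteEdges
    {s(Sum.inl ⟨p, by omega⟩, Sum.inr ⟨p, by omega⟩),
     s(Sum.inl ⟨p + 1, by omega⟩, Sum.inr ⟨p, by omega⟩),
     s(Sum.inl ⟨p + 1, by omega⟩, Sum.inr ⟨p + 1, by omega⟩)}

open Function Sum

theorem Fin.val_succAbove {n : ℕ} (k : Fin (n + 1)) (i : Fin n) :
    (k.succAbove i : ℕ) = if (i : ℕ) < k then (i : ℕ) else i + 1 := by
  unfold Fin.succAbove
  split_ifs <;> simp_all [Fin.lt_def, Fin.val_succ]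

theorem Fin.exists_val_le_one_ne {n : ℕ} (x : Fin (n + 2)) :
    ∃ k : Fin (n + 2), (k : ℕ) ≤ 1 ∧ k ≠ x :=
  if hx : (x : ℕ) = 0 then ⟨1, by simp [Fin.ext_iff, hx]⟩
  else ⟨0, by simp [Fin.ext_iff]; omega⟩

namespace SimpleGraph

variable {V W : Type*} [DecidableEq V] [DecidableEq W] {G : SimpleGraph V}

def IsHamiltonLaceable {α β : Type*} [DecidableEq α] [DecidableEq β]
    (G : SimpleGraph (α ⊕ β)) : Prop :=
  ∀ a b, ∃ w : G.Walk (inl a) (inr b), w.IsHamiltonian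

theorem Walk.exists_isHamiltonian_of_isChain [Fintype V] {l : List V} {u v : V} (hl : l.Nodup)
    (hlen : l.length = Fintype.card V) (hchain : l.IsChain G.Adj) (hu : l.head? = some u)
    (hv : l.getLast? = some v) : ∃ w : G.Walk u v, w.IsHamiltonian := by
  have hne : l ≠ [] := by rintro rfl; simp at hu
  refine ⟨(ofSupport l hne hchain).copy (by simpa [List.head?_eq_some_head hne] using hu)
    (by simpa [List.getLast?_eq_some_getLast hne] using hv),
    isHamiltonian_iff_isPath_and_length_eq.2 ⟨?_, ?_⟩⟩
  · simpa using IsPath.mk' (by simpa using hl)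
  · simp [hlen]

theorem Walk.IsHamiltonian.exists_isHamiltonian_splice {H : SimpleGraph W} {u v : V}
    {w : G.Walk u v} (hw : w.IsHamiltonian) (huv : u ≠ v) (f : G →g H) (hf : Injective f)
    {a b : W} (hab : a ≠ b) (hrange : ∀ y, y ∉ Set.range f ↔ y = a ∨ y = b)
    (hub : H.Adj (f u) b) (hba : H.Adj b a) (ha : ∀ x, G.Adj u x → H.Adj a (f x)) :
    ∃ w' : H.Walk (f u) (f v), w'.IsHamiltonian := by
  cases w with
  | nil => exact absurd rfl huv
  | @cons _ x _ hux w =>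
    refine ⟨.cons hub (.cons hba (.cons (ha x hux) (w.map f))), ?_⟩
    have hpath := (Walk.cons_isPath_iff _ _).1 hw.isPath
    have hfa : a ∉ Set.range f := (hrange a).2 (.inl rfl)
    have hfb : b ∉ Set.range f := (hrange b).2 (.inr rfl)
    refine Walk.IsPath.isHamiltonian_of_mem ?_ fun y => ?_
    · simp only [Walk.cons_isPath_iff, Walk.support_cons, Walk.support_map, List.mem_cons,
        List.mem_map, not_or, not_exists, not_and]
      exact ⟨⟨⟨hpath.1.map hf, fun y _ h => hfa ⟨y, h⟩⟩, hab.symm, fun y _ h => hfb ⟨y, h⟩⟩,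
        fun h => hfb ⟨u, h⟩, fun h => hfa ⟨u, h⟩,
        fun y hy h => hpath.2 (hf h ▸ hy)⟩
    · simp only [Walk.support_cons, Walk.support_map, List.mem_cons, List.mem_map]
      by_cases hy : y ∈ Set.range f
      · obtain ⟨z, rfl⟩ := hy
        rcases List.mem_cons.1 (hw.mem_support z) with rfl | hz
        exacts [.inl rfl, .inr <| .inr <| .inr ⟨z, hz, rfl⟩]
      · rcases (hrange y).1 hy with rfl | rfl
        exacts [.inr <| .inr <| .inl rfl, .inr <| .inl rfl]

end SimpleGraph

namespace bipartiteMinusPath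

open SimpleGraph

variable {p : ℕ}

theorem adj_inl_inr_iff {i j : Fin (p + 2)} :
    (bipartiteMinusPath p).Adj (inl i) (inr j) ↔ (j : ℕ) < p ∨ (i : ℕ) < j := by
  simp [bipartiteMinusPath, Fin.ext_iff]
  omega

theorem adj_inl_of_val_lt {i : Fin (p + 2)} (hi : (i : ℕ) < p) (j : Fin (p + 2)) :
    (bipartiteMinusPath p).Adj (inl i) (inr j) :=
  adj_inl_inr_iff.2 (by omega)

theorem adj_inr_of_val_lt {j : Fin (p + 2)} (hj : (j : ℕ) < p) (i : Fin (p + 2)) :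
    (bipartiteMinusPath p).Adj (inl i) (inr j) :=
  adj_inl_inr_iff.2 (.inl hj)

theorem not_adj_inl_inl {i j : Fin (p + 2)} : ¬(bipartiteMinusPath p).Adj (inl i) (inl j) := by
  simp [bipartiteMinusPath]

theorem not_adj_inr_inr {i j : Fin (p + 2)} : ¬(bipartiteMinusPath p).Adj (inr i) (inr j) := by
  simp [bipartiteMinusPath]

instance (p : ℕ) : DecidableRel (bipartiteMinusPath p).Adj
  | inl _, inl _ => isFalse not_adj_inl_inl
  | inr _, inr _ => isFalse not_adj_inr_inr
  | inl _, inr _ => decidable_of_iff _ adj_inl_inr_iff.symm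
  | inr _, inl _ =>
    decidable_of_iff _ ((bipartiteMinusPath p).adj_comm _ _ |>.trans adj_inl_inr_iff).symm

def hamiltonPathTwo : Fin 4 → Fin 4 → List (Fin 4 ⊕ Fin 4)
  | 0, 0 => [inl 0, inr 2, inl 1, inr 3, inl 2, inr 1, inl 3, inr 0]
  | 0, 1 => [inl 0, inr 2, inl 1, inr 3, inl 2, inr 0, inl 3, inr 1]
  | 0, 2 => [inl 0, inr 3, inl 2, inr 0, inl 3, inr 1, inl 1, inr 2]
  | 0, 3 => [inl 0, inr 2, inl 1, inr 0, inl 3, inr 1, inl 2, inr 3]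
  | 1, 0 => [inl 1, inr 2, inl 0, inr 3, inl 2, inr 1, inl 3, inr 0]
  | 1, 1 => [inl 1, inr 2, inl 0, inr 3, inl 2, inr 0, inl 3, inr 1]
  | 1, 2 => [inl 1, inr 3, inl 2, inr 0, inl 3, inr 1, inl 0, inr 2]
  | 1, 3 => [inl 1, inr 2, inl 0, inr 0, inl 3, inr 1, inl 2, inr 3]
  | 2, 0 => [inl 2, inr 3, inl 0, inr 2, inl 1, inr 1, inl 3, inr 0]
  | 2, 1 => [inl 2, inr 3, inl 0, inr 2, inl 1, inr 0, inl 3, inr 1]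
  | 2, 2 => [inl 2, inr 3, inl 0, inr 0, inl 3, inr 1, inl 1, inr 2]
  | 2, 3 => [inl 2, inr 0, inl 3, inr 1, inl 0, inr 2, inl 1, inr 3]
  | 3, 0 => [inl 3, inr 1, inl 0, inr 2, inl 1, inr 3, inl 2, inr 0]
  | 3, 1 => [inl 3, inr 0, inl 0, inr 2, inl 1, inr 3, inl 2, inr 1]
  | 3, 2 => [inl 3, inr 0, inl 0, inr 1, inl 2, inr 3, inl 1, inr 2]
  | 3, 3 => [inl 3, inr 0, inl 0, inr 2, inl 1, inr 1, inl 2, inr 3]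

theorem isHamiltonLaceable_two : IsHamiltonLaceable (bipartiteMinusPath 2) := by
  have h : ∀ u v, (hamiltonPathTwo u v).Nodup ∧ (hamiltonPathTwo u v).length = 8 ∧
      (hamiltonPathTwo u v).IsChain (bipartiteMinusPath 2).Adj ∧
      (hamiltonPathTwo u v).head? = some (inl u) ∧
      (hamiltonPathTwo u v).getLast? = some (inr v) := by
    decide
  intro u v
  obtain ⟨hnodup, hlen, hchain, hu, hv⟩ := h u v
  exact Walk.exists_isHamiltonian_of_isChain hnodup hlen hchain hu hv

def succAboveHom (k l : Fin (p + 3)) (hl : (l : ℕ) ≤ p) :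
    bipartiteMinusPath p →g bipartiteMinusPath (p + 1) where
  toFun := Sum.map k.succAbove l.succAbove
  map_rel' := by
    rintro (i | i) (j | j) h
    · exact absurd h not_adj_inl_inl
    · rw [adj_inl_inr_iff] at h
      rw [Sum.map_inl, Sum.map_inr, adj_inl_inr_iff, Fin.val_succAbove, Fin.val_succAbove]
      split_ifs <;> omega
    · rw [adj_comm, adj_inl_inr_iff] at h
      rw [Sum.map_inr, Sum.map_inl, adj_comm, adj_inl_inr_iff, Fin.val_succAbove,
        Fin.val_succAbove]
      split_ifs <;> omega
    · exact absurd h not_adj_inr_inr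

@[simp]
theorem coe_succAboveHom (k l : Fin (p + 3)) (hl : (l : ℕ) ≤ p) :
    ⇑(succAboveHom k l hl) = Sum.map k.succAbove l.succAbove :=
  rfl

theorem isHamiltonLaceable_succ (hp : 1 ≤ p) (h : IsHamiltonLaceable (bipartiteMinusPath p)) :
    IsHamiltonLaceable (bipartiteMinusPath (p + 1)) := by
  intro u v
  obtain ⟨k, hk, hku⟩ := Fin.exists_val_le_one_ne u
  obtain ⟨l, hl, hlv⟩ := Fin.exists_val_le_one_ne v
  obtain ⟨u, rfl⟩ := Fin.exists_succAbove_eq hku.symm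
  obtain ⟨v, rfl⟩ := Fin.exists_succAbove_eq hlv.symm
  obtain ⟨w, hw⟩ := h u v
  refine hw.exists_isHamiltonian_splice inl_ne_inr (succAboveHom k l (by omega))
    (Fin.succAbove_right_injective.sumMap Fin.succAbove_right_injective) (a := inl k)
    (b := inr l) inl_ne_inr ?_ (adj_inr_of_val_lt (by omega) _)
    (adj_inr_of_val_lt (by omega) _).symm ?_
  · rintro (y | y) <;> simp
  · rintro (x | x) hx
    exacts [absurd hx not_adj_inl_inl, adj_inl_of_val_lt (by omega) _]

theorem isHamiltonLaceable (hp : 2 ≤ p) : IsHamiltonLaceable (bipartiteMinusPath p) := by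
  induction p, hp using Nat.le_induction with
  | base => exact isHamiltonLaceable_two
  | succ p hp ih => exact isHamiltonLaceable_succ (by omega) ih

end bipartiteMinusPath

/-- For every `p ≥ 2` the graph `K_{p+2,p+2}` minus the edges of a path on four
vertices is Hamilton-laceable: any vertex of one part and any vertex of the other
part are the ends of a Hamiltonian path. -/
theorem bipartiteMinusPath_hamiltonLaceable (p : ℕ) (hp : 2 ≤ p)
    (u v : Fin (p + 2)) :
    ∃ w : (bipartiteMinusPath p).Walk (Sum.inl u) (Sum.inr v),
      w.IsHamiltonian :=
  bipartiteMinusPath.isHamiltonLaceable hp u v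
end
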